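/- arXiv:1807.11523 — 2 statements merged into one kernel-verified Lean document; each statement's English description precedes it below -/
import Mathlib

section
/- Let H be a seminormal finitely primary monoid of rank s ≥ 2, i.e. H = H^× ∪ q_1⋯q_s F, where F = F^× × [q_1,…,q_s] is a factorial monoid with s pairwise non-associated prime elements q_1, …, q_s, H is a submonoid of F with H \ H^× ⊆ q_1⋯q_s F, and (q_1⋯q_s)^α F ⊆ H for some α ∈ ℕ. Then the set of elasticities of H is {ρ(a) : a ∈ H} = {n/2 : n ∈ ℕ, n ≥ 2}. -/
open Filter Topology

/-- The set of factorization lengths of `a`: the set of all `k` such that `a` is a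
product of `k` atoms (irreducibles); by convention it is `{0}` for units. -/
noncomputable def lengthSet (H : Type*) [CommMonoid H] (a : H) : Set ℕ :=
  open Classical in
  if IsUnit a then {0}
  else {k | ∃ f : Fin k → H, (∀ i, Irreducible (f i)) ∧ a = ∏ i, f i}

/-- The elasticity `ρ(a) = max L(a) / min L(a)` of an element of a BF-monoid,
with `ρ(a) = 1` for units. -/
noncomputable def elasticity (H : Type*) [CommMonoid H] (a : H) : ℝ :=
  open Classical in
  if IsUnit a then 1
  else ((sSup (lengthSet H a) : ℕ) : ℝ) / ((sInf (lengthSet H a) : ℕ) : ℝ)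

/-- The elasticity `ρ(H) = sup {ρ(a) : a ∈ H} ∈ ℝ≥1 ∪ {∞}` of the monoid `H`. -/
noncomputable def monoidElasticity (H : Type*) [CommMonoid H] : EReal :=
  ⨆ a : H, ((elasticity H a : ℝ) : EReal)

/-- The set `R̄(H)` of asymptotic elasticities `ρ̄(a) = lim_{n → ∞} ρ(aⁿ)`
of nonunits `a ∈ H` (membership requires the limit to exist). -/
def asympSet (H : Type*) [CommMonoid H] : Set EReal :=
  {r | ∃ a : H, ¬ IsUnit a ∧
    Tendsto (fun n : ℕ => ((elasticity H (a ^ n) : ℝ) : EReal)) atTop (nhds r)}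

/-- `H` is locally finitely generated: for every `a ∈ H` there are only finitely many
atoms, up to associates, dividing some power of `a`. -/
def LocallyFinitelyGenerated (H : Type*) [CommMonoid H] : Prop :=
  ∀ a : H, {u : Associates H | Irreducible u ∧ ∃ n : ℕ, u ∣ Associates.mk (a ^ n)}.Finite

/-- `H` is a BF-monoid: atomic (every nonunit has a factorization into atoms) and
all sets of lengths are finite. -/
def IsBFMonoid (H : Type*) [CommMonoid H] : Prop :=
  (∀ a : H, ¬ IsUnit a → (lengthSet H a).Nonempty) ∧ ∀ a : H, (lengthSet H a).Finite

/-- `(k, ℓ) ≠ (0,0)` is a nice pair with respect to `(a, b)` if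
`max L((aᵏbˡ)ᵗ) = t · max L(aᵏbˡ)` and `min L((aᵏbˡ)ᵗ) = t · min L(aᵏbˡ)` for all `t ∈ ℕ`. -/
def IsNicePair (H : Type*) [CommMonoid H] (a b : H) (k ℓ : ℕ) : Prop :=
  ¬ (k = 0 ∧ ℓ = 0) ∧ ∀ t : ℕ, 0 < t →
    sSup (lengthSet H ((a ^ k * b ^ ℓ) ^ t)) = t * sSup (lengthSet H (a ^ k * b ^ ℓ)) ∧
    sInf (lengthSet H ((a ^ k * b ^ ℓ) ^ t)) = t * sInf (lengthSet H (a ^ k * b ^ ℓ))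

/-- `H` is strongly primary: `H ≠ H^×` and for every nonunit `a` there is `n ∈ ℕ`
such that every product of `n` nonunits of `H` is divisible by `a`. -/
def StronglyPrimary (H : Type*) [CommMonoid H] : Prop :=
  (∃ a : H, ¬ IsUnit a) ∧ ∀ a : H, ¬ IsUnit a → ∃ n : ℕ, 0 < n ∧
    ∀ f : Fin n → H, (∀ i, ¬ IsUnit (f i)) → a ∣ ∏ i, f i

/-- `H` is half-factorial: atomic and `|L(a)| = 1` for every `a ∈ H`. -/
def IsHalfFactorial (H : Type*) [CommMonoid H] : Prop :=
  ∀ a : H, ∃ k : ℕ, lengthSet H a = {k}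


noncomputable instance {F : Type*} [CancelCommMonoid F] (H : Submonoid F) :
    CancelCommMonoid H :=
  Function.Injective.cancelCommMonoid (Subtype.val : H → F)
    Subtype.coe_injective rfl (fun _ _ => rfl) (fun _ _ => rfl)

/-- A prime element of a (multiplicatively written, zero-free) commutative monoid:
a nonunit `p` such that `p ∣ a * b` implies `p ∣ a` or `p ∣ b`. -/
def IsPrimeElement {F : Type*} [CommMonoid F] (p : F) : Prop :=
  ¬ IsUnit p ∧ ∀ a b : F, p ∣ a * b → p ∣ a ∨ p ∣ b

/-!
Write `P = q₁⋯q_s`, so that the nonunits of `H` are exactly the elements of `P F`. An element of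
`H` is then an atom iff it is divisible by `P` but not by `P²`, and a product of `k` atoms is
divisible by `Pᵏ`. Hence `max L(a)` is the `P`-multiplicity `m` of `a`, attained by
`a = (a / P^(m-1)) · P^(m-1)`. Since `s ≥ 2`, every `y ∈ F` splits as `y₁ y₂` with `P ∤ y₁, y₂`
(separate the `q₁`-part from the rest), so `P² y = (P y₁)(P y₂)` shows `min L(a) = min(m, 2)`.
Thus `ρ(a) = max(m, 2) / 2`, and `a = Pⁿ` realizes `n / 2`.
-/

open Finset

section PrimeElement

variable {F : Type*} [CommMonoid F] {p : F}

theorem IsPrimeElement.not_dvd_unit (hp : IsPrimeElement p) (u : Fˣ) : ¬p ∣ u :=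
  fun h => hp.1 (isUnit_of_dvd_unit h u.isUnit)

theorem IsPrimeElement.not_dvd_pow (hp : IsPrimeElement p) {x : F} (hx : ¬p ∣ x) :
    ∀ n : ℕ, ¬p ∣ x ^ n
  | 0 => by simpa using hp.not_dvd_unit 1
  | n + 1 => by
    rw [pow_succ]
    exact fun h => (hp.2 _ _ h).elim (hp.not_dvd_pow hx n) hx

theorem IsPrimeElement.not_dvd_prod (hp : IsPrimeElement p) {ι : Type*} {t : Finset ι}
    {g : ι → F} (h : ∀ i ∈ t, ¬p ∣ g i) : ¬p ∣ ∏ i ∈ t, g i := by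
  classical
  induction t using Finset.induction_on with
  | empty => simpa using hp.not_dvd_unit 1
  | insert i t hi ih =>
    rw [prod_insert hi]
    exact fun hd => (hp.2 _ _ hd).elim (h i (mem_insert_self i t))
      (ih fun j hj => h j (mem_insert_of_mem hj))

end PrimeElement

theorem IsPrimeElement.not_dvd_of_not_associated {F : Type*} [CancelCommMonoid F] {p p' : F}
    (hp : IsPrimeElement p) (hp' : IsPrimeElement p') (h : ¬Associated p p') : ¬p ∣ p' := by
  rintro ⟨c, rfl⟩
  rcases hp'.2 p c dvd_rfl with ⟨d, hd⟩ | ⟨d, hd⟩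
  · have hcd : c * d = 1 := mul_left_cancel (a := p) (by rw [mul_one, ← mul_assoc, ← hd])
    exact h ⟨(IsUnit.of_mul_eq_one d hcd).unit, rfl⟩
  · have hpd : p * d = 1 :=
      mul_left_cancel (a := c) (by rw [mul_one, mul_left_comm, ← mul_assoc, ← hd])
    exact hp.1 (IsUnit.of_mul_eq_one d hpd)

theorem multiplicity_pow_self_of_not_isUnit {F : Type*} [CancelCommMonoid F] {P : F}
    (hP : ¬IsUnit P) (n : ℕ) : multiplicity P (P ^ n) = n :=
  multiplicity_eq_of_dvd_of_not_dvd dvd_rfl fun h => hP <| isUnit_of_dvd_one <|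
    (IsLeftRegular.all (P ^ n)).dvd_cancel_left.1 (by rwa [mul_one, ← pow_succ])

section PrimeBasis

variable {F : Type*} [CancelCommMonoid F] {s : ℕ} {q : Fin s → F}

theorem unit_mul_prod_pow_eq (u : Fˣ) (e : Fin s → ℕ) (i : Fin s) :
    (u : F) * ∏ j, q j ^ e j = q i ^ e i * (u * ∏ j ∈ univ.erase i, q j ^ e j) := by
  rw [← mul_prod_erase univ _ (mem_univ i), mul_left_comm]

theorem not_dvd_unit_mul_prod_pow (hq : ∀ i, IsPrimeElement (q i))
    (hna : ∀ i j, i ≠ j → ¬Associated (q i) (q j)) (u : Fˣ) (e : Fin s → ℕ) {i : Fin s}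
    {t : Finset (Fin s)} (hi : i ∉ t) : ¬q i ∣ u * ∏ j ∈ t, q j ^ e j := fun h =>
  ((hq i).2 _ _ h).elim ((hq i).not_dvd_unit u) <| (hq i).not_dvd_prod fun j hj =>
    (hq i).not_dvd_pow ((hq i).not_dvd_of_not_associated (hq j)
      (hna i j (by rintro rfl; exact hi hj))) _

theorem finiteMultiplicity_prod (hq : ∀ i, IsPrimeElement (q i))
    (hna : ∀ i j, i ≠ j → ¬Associated (q i) (q j))
    (hF : ∀ x : F, ∃ (u : Fˣ) (e : Fin s → ℕ), x = (u : F) * ∏ i, q i ^ e i)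
    (i : Fin s) (x : F) : FiniteMultiplicity (∏ k, q k) x := by
  obtain ⟨u, e, rfl⟩ := hF x
  refine ⟨e i, fun h => not_dvd_unit_mul_prod_pow hq hna u e (notMem_erase i univ) ?_⟩
  rw [unit_mul_prod_pow_eq u e i] at h
  exact (IsLeftRegular.all _).dvd_cancel_left.mp
    (pow_succ (q i) (e i) ▸ (pow_dvd_pow_of_dvd (dvd_prod_of_mem q (mem_univ i)) _).trans h)

theorem exists_eq_mul_not_dvd_prod (hq : ∀ i, IsPrimeElement (q i))
    (hna : ∀ i j, i ≠ j → ¬Associated (q i) (q j))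
    (hF : ∀ x : F, ∃ (u : Fˣ) (e : Fin s → ℕ), x = (u : F) * ∏ i, q i ^ e i)
    {i j : Fin s} (hij : i ≠ j) (y : F) :
    ∃ y₁ y₂, y = y₁ * y₂ ∧ ¬(∏ k, q k) ∣ y₁ ∧ ¬(∏ k, q k) ∣ y₂ := by
  obtain ⟨u, e, rfl⟩ := hF y
  have hdvd (k : Fin s) {z : F} (h : (∏ k, q k) ∣ z) : q k ∣ z :=
    (dvd_prod_of_mem q (mem_univ k)).trans h
  refine ⟨u * q i ^ e i, ∏ k ∈ univ.erase i, q k ^ e k, ?_, fun h => ?_, fun h => ?_⟩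
  · rw [unit_mul_prod_pow_eq u e i, mul_left_comm, mul_assoc]
  · refine not_dvd_unit_mul_prod_pow hq hna u e (t := {i}) (by simpa using hij.symm) ?_
    simpa using hdvd j h
  · refine not_dvd_unit_mul_prod_pow hq hna 1 e (notMem_erase i univ) ?_
    simpa using hdvd i h

end PrimeBasis

section LengthSet

variable {M : Type*} [CommMonoid M] {a : M}

theorem mem_lengthSet_iff (ha : ¬IsUnit a) {k : ℕ} :
    k ∈ lengthSet M a ↔ ∃ f : Fin k → M, (∀ i, Irreducible (f i)) ∧ a = ∏ i, f i := by
  simp [lengthSet, ha]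

theorem zero_notMem_lengthSet (ha : ¬IsUnit a) : 0 ∉ lengthSet M a := by
  rw [mem_lengthSet_iff ha]
  rintro ⟨f, -, rfl⟩
  exact ha (by simp)

theorem one_mem_lengthSet_iff : 1 ∈ lengthSet M a ↔ Irreducible a := by
  by_cases ha : IsUnit a
  · simpa [lengthSet, ha] using fun h : Irreducible a => h.not_isUnit ha
  · rw [mem_lengthSet_iff ha]
    exact ⟨fun ⟨f, hf, h⟩ => by simpa [h] using hf 0, fun h => ⟨fun _ => a, fun _ => h, by simp⟩⟩

theorem pow_mul_mem_lengthSet {x y : M} (hx : Irreducible x) (hy : Irreducible y) (n : ℕ) :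
    n + 1 ∈ lengthSet M (y * x ^ n) := by
  rw [mem_lengthSet_iff fun h => hy.not_isUnit (IsUnit.mul_iff.1 h).1]
  exact ⟨Fin.cons y fun _ => x, Fin.cases hy fun _ => hx, by simp [Fin.prod_cons]⟩

theorem elasticity_eq_div (ha : ¬IsUnit a) {m n : ℕ} (hmax : IsGreatest (lengthSet M a) m)
    (hmin : IsLeast (lengthSet M a) n) : elasticity M a = m / n := by
  simp [elasticity, ha, hmax.csSup_eq, hmin.csInf_eq]

end LengthSet

/-- `H = H^× ∪ P F`. -/
structure Submonoid.IsUnitsUnionMul {F : Type*} [CancelCommMonoid F] (H : Submonoid F) (P : F) :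
    Prop where
  not_isUnit : ¬IsUnit P
  mul_mem : ∀ x : F, P * x ∈ H
  dvd_of_not_isUnit : ∀ a : H, ¬IsUnit a → P ∣ (a : F)

namespace Submonoid.IsUnitsUnionMul

variable {F : Type*} [CancelCommMonoid F] {H : Submonoid F} {P : F} (hH : H.IsUnitsUnionMul P)
include hH

theorem isUnit_iff (a : H) : IsUnit a ↔ ¬P ∣ a :=
  ⟨fun ha hd => hH.not_isUnit (isUnit_of_dvd_unit hd (ha.map H.subtype)),
    Not.imp_symm (hH.dvd_of_not_isUnit a)⟩

theorem irreducible_iff (a : H) : Irreducible a ↔ P ∣ a ∧ ¬P ^ 2 ∣ a := by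
  rw [← not_not (a := P ∣ (a : F)), ← hH.isUnit_iff]
  refine ⟨fun h => ⟨h.not_isUnit, fun ⟨y, hy⟩ => ?_⟩, fun ⟨ha, hsq⟩ => ⟨ha, fun b c hbc => ?_⟩⟩
  · have hsplit : a = ⟨P * 1, hH.mul_mem 1⟩ * ⟨P * y, hH.mul_mem y⟩ :=
      Subtype.ext (by simp [hy, pow_two, mul_assoc])
    refine (h.isUnit_or_isUnit hsplit).elim (fun hu => ?_) (fun hu => ?_) <;>
      exact (hH.isUnit_iff _).1 hu (dvd_mul_right P _)
  · by_contra! hbc'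
    refine hsq (pow_two P ▸ hbc ▸ mul_dvd_mul ?_ ?_)
    · exact hH.dvd_of_not_isUnit b hbc'.1
    · exact hH.dvd_of_not_isUnit c hbc'.2

theorem irreducible_mul {y : F} (hy : ¬P ∣ y) : Irreducible (⟨P * y, hH.mul_mem y⟩ : H) := by
  refine (hH.irreducible_iff _).2 ⟨dvd_mul_right P y, fun h => hy ?_⟩
  rw [pow_two] at h
  exact (IsLeftRegular.all P).dvd_cancel_left.1 h

theorem pow_dvd_of_mem_lengthSet {a : H} {k : ℕ} (hk : k ∈ lengthSet H a) : P ^ k ∣ a := by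
  by_cases ha : IsUnit a
  · simp_all [lengthSet]
  obtain ⟨f, hf, rfl⟩ := (mem_lengthSet_iff ha).1 hk
  rw [Submonoid.coe_finsetProd]
  simpa using prod_dvd_prod_of_dvd (s := univ) (fun _ => P) _ fun i _ =>
    hH.dvd_of_not_isUnit (f i) (hf i).not_isUnit

theorem succ_mem_lengthSet {a : H} {n : ℕ} (h : P ^ (n + 1) ∣ a) (h' : ¬P ^ (n + 2) ∣ a) :
    n + 1 ∈ lengthSet H a := by
  obtain ⟨b, hb⟩ := h
  have hPb : ¬P ∣ b := fun hd => h' (hb ▸ pow_succ P (n + 1) ▸ mul_dvd_mul_left _ hd)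
  have ha : a = ⟨P * b, hH.mul_mem b⟩ * ⟨P * 1, hH.mul_mem 1⟩ ^ n :=
    Subtype.ext (by simp only [hb, pow_succ, mul_one, SubmonoidClass.mk_pow, mk_mul_mk]; ac_rfl)
  exact ha ▸ pow_mul_mem_lengthSet (hH.irreducible_mul (hH.not_isUnit.imp isUnit_of_dvd_one))
    (hH.irreducible_mul hPb) n

theorem two_mem_lengthSet (hsplit : ∀ y : F, ∃ y₁ y₂, y = y₁ * y₂ ∧ ¬P ∣ y₁ ∧ ¬P ∣ y₂)
    {a : H} (h : P ^ 2 ∣ a) : 2 ∈ lengthSet H a := by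
  obtain ⟨y, hy⟩ := h
  obtain ⟨y₁, y₂, rfl, hy₁, hy₂⟩ := hsplit y
  have ha : a = ⟨P * y₂, hH.mul_mem y₂⟩ * ⟨P * y₁, hH.mul_mem y₁⟩ ^ 1 :=
    Subtype.ext (by simp only [hy, pow_two, pow_one, mk_mul_mk]; ac_rfl)
  exact ha ▸ pow_mul_mem_lengthSet (hH.irreducible_mul hy₁) (hH.irreducible_mul hy₂) 1

theorem multiplicity_pos {a : H} (ha : ¬IsUnit a) : 0 < multiplicity P (a : F) :=
  multiplicity_pos_of_dvd (hH.dvd_of_not_isUnit a ha)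

theorem isGreatest_lengthSet {a : H} (hfin : FiniteMultiplicity P a) (ha : ¬IsUnit a) :
    IsGreatest (lengthSet H a) (multiplicity P (a : F)) := by
  refine ⟨?_, fun k hk => hfin.le_multiplicity_of_pow_dvd (hH.pow_dvd_of_mem_lengthSet hk)⟩
  obtain ⟨n, hn⟩ := Nat.exists_eq_add_one_of_ne_zero (hH.multiplicity_pos ha).ne'
  rw [hn]
  exact hH.succ_mem_lengthSet (hn ▸ pow_multiplicity_dvd P (a : F))
    (hfin.not_pow_dvd_of_multiplicity_lt (by omega))

theorem isLeast_lengthSet (hsplit : ∀ y : F, ∃ y₁ y₂, y = y₁ * y₂ ∧ ¬P ∣ y₁ ∧ ¬P ∣ y₂)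
    {a : H} (hfin : FiniteMultiplicity P a) (ha : ¬IsUnit a) :
    IsLeast (lengthSet H a) (min (multiplicity P (a : F)) 2) := by
  have hk0 {k : ℕ} (hk : k ∈ lengthSet H a) : k ≠ 0 := by
    rintro rfl
    exact zero_notMem_lengthSet ha hk
  rcases Nat.lt_or_ge (multiplicity P (a : F)) 2 with hm | hm
  · rw [min_eq_left hm.le]
    exact ⟨(hH.isGreatest_lengthSet hfin ha).1, fun k hk => by have := hk0 hk; omega⟩
  · rw [min_eq_right hm]
    refine ⟨hH.two_mem_lengthSet hsplit (pow_dvd_of_le_multiplicity hm), fun k hk => ?_⟩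
    have hk1 : k ≠ 1 := by
      rintro rfl
      exact ((hH.irreducible_iff a).1 (one_mem_lengthSet_iff.1 hk)).2
        (pow_dvd_of_le_multiplicity hm)
    have := hk0 hk
    omega

theorem elasticity_eq (hsplit : ∀ y : F, ∃ y₁ y₂, y = y₁ * y₂ ∧ ¬P ∣ y₁ ∧ ¬P ∣ y₂)
    {a : H} (hfin : FiniteMultiplicity P a) :
    elasticity H a = (max (multiplicity P (a : F)) 2 : ℕ) / 2 := by
  by_cases ha : IsUnit a
  · simp [elasticity, ha, multiplicity_eq_zero.2 ((hH.isUnit_iff a).1 ha)]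
  rw [elasticity_eq_div ha (hH.isGreatest_lengthSet hfin ha) (hH.isLeast_lengthSet hsplit hfin ha)]
  have hpos := hH.multiplicity_pos ha
  rcases Nat.lt_or_ge (multiplicity P (a : F)) 2 with hm | hm
  · obtain hm1 : multiplicity P (a : F) = 1 := by omega
    norm_num [hm1]
  · rw [min_eq_right hm, max_eq_left hm]
    norm_num

end Submonoid.IsUnitsUnionMul

/-- Let `H = H^× ∪ q₁⋯q_s F` be a seminormal finitely primary monoid
of rank `s ≥ 2`, where `F = F^× × [q₁, …, q_s]` is factorial with pairwise
non-associated primes `q₁, …, q_s`. Then `{ρ(a) : a ∈ H} = {n/2 : n ∈ ℕ, n ≥ 2}`. -/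
theorem statement18 (F : Type*) [CancelCommMonoid F] (s : ℕ) (hs : 2 ≤ s)
    (q : Fin s → F) (hq : ∀ i, IsPrimeElement (q i))
    (hna : ∀ i j, i ≠ j → ¬ Associated (q i) (q j))
    (hF : ∀ x : F, ∃ (u : Fˣ) (e : Fin s → ℕ), x = (u : F) * ∏ i, q i ^ e i)
    (H : Submonoid F)
    (hsub : ∀ x : F, (∏ i, q i) * x ∈ H)
    (hsemi : ∀ x : H, ¬ IsUnit x → ∃ y : F, (x : F) = (∏ i, q i) * y) :
    {t : ℝ | ∃ a : H, elasticity H a = t} =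
      {t : ℝ | ∃ n : ℕ, 2 ≤ n ∧ t = (n : ℝ) / 2} := by
  have hfin := finiteMultiplicity_prod hq hna hF ⟨0, by omega⟩
  have hsplit := exists_eq_mul_not_dvd_prod hq hna hF (i := ⟨0, by omega⟩) (j := ⟨1, by omega⟩)
    (by simp)
  have hH : H.IsUnitsUnionMul (∏ i, q i) := ⟨(hfin 1).not_isUnit, hsub, hsemi⟩
  ext t
  constructor
  · rintro ⟨a, rfl⟩
    exact ⟨_, le_max_right _ _, hH.elasticity_eq hsplit (hfin a)⟩
  · rintro ⟨n, hn, rfl⟩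
    obtain ⟨k, rfl⟩ := Nat.exists_eq_add_of_le' (by omega : 1 ≤ n)
    refine ⟨⟨_, pow_succ' (∏ i, q i) k ▸ hsub _⟩, ?_⟩
    rw [hH.elasticity_eq hsplit (hfin _), multiplicity_pow_self_of_not_isUnit hH.not_isUnit,
      max_eq_left hn]
end

section
/- Let H be a strongly primary monoid and let (a_k)_{k=1}^{∞} be a sequence of elements of H such that lim_{k→∞} max L(a_k) = ∞. Then liminf_{k→∞} ρ(a_k) ≥ ρ(H). -/
open Filter Topology

/-!
Strong primality bounds the number of nonunit factors in any factorization of a nonunit, so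
`H` is a BF-monoid. Fix a nonunit `b` with `M = max L(b)`, `m = min L(b)`, and `n` such that
`b` divides every element having a factorization of length at least `n`. Write `a_k = bᵗ d`
with `t` maximal. Then `max L(a_k) ≥ t M`, while `min L(a_k) ≤ t m + (n - 1)` because `b ∤ d`
forces `min L(d) < n`; moreover `t ≥ max L(a_k) / n → ∞`. Hence
`ρ(a_k) ≥ t M / (t m + n - 1) → M / m = ρ(b)`.
-/

section Lengths

variable {H : Type*} [CommMonoid H]

theorem lengthSet_of_isUnit {a : H} (ha : IsUnit a) : lengthSet H a = {0} := by
  simp [lengthSet, ha]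

theorem List.eq_nil_of_isUnit_prod {l : List H} (hl : ∀ x ∈ l, Irreducible x)
    (hu : IsUnit l.prod) : l = [] :=
  List.eq_nil_iff_forall_not_mem.2 fun x hx =>
    (hl x hx).not_isUnit (List.prod_isUnit_iff.1 hu x hx)

theorem exists_list_prod_eq_of_associated {l : List H} (hl : ∀ x ∈ l, Irreducible x) {a : H}
    (ha : ¬IsUnit a) (h : Associated l.prod a) :
    ∃ l' : List H, (∀ x ∈ l', Irreducible x) ∧ l'.length = l.length ∧ l'.prod = a := by
  obtain ⟨u, rfl⟩ := h
  cases l with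
  | nil => exact absurd (by simp) ha
  | cons x t =>
    refine ⟨(x * u) :: t, ?_, rfl, by simp only [List.prod_cons, mul_right_comm]⟩
    simp only [List.mem_cons, forall_eq_or_imp] at hl ⊢
    exact ⟨(irreducible_mul_isUnit u.isUnit).2 hl.1, hl.2⟩

theorem mem_lengthSet_iff_s19 {a : H} {k : ℕ} :
    k ∈ lengthSet H a ↔
      ∃ l : List H, (∀ x ∈ l, Irreducible x) ∧ l.length = k ∧ Associated l.prod a := by
  by_cases ha : IsUnit a
  · rw [lengthSet_of_isUnit ha, Set.mem_singleton_iff]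
    constructor
    · rintro rfl
      exact ⟨[], by simp, rfl, by simpa using (associated_one_iff_isUnit.2 ha).symm⟩
    · rintro ⟨l, hl, rfl, hla⟩
      simp [List.eq_nil_of_isUnit_prod hl (hla.symm.isUnit ha)]
  · simp only [lengthSet, if_neg ha, Set.mem_ofPred_eq]
    constructor
    · rintro ⟨f, hf, rfl⟩
      refine ⟨List.ofFn f, ?_, List.length_ofFn, by rw [List.prod_ofFn]⟩
      simpa [List.mem_ofFn] using hf
    · rintro ⟨l, hl, rfl, hla⟩
      obtain ⟨l', hl', hlen, rfl⟩ := exists_list_prod_eq_of_associated hl ha hla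
      rw [← hlen]
      exact ⟨l'.get, fun i => hl' _ (l'.get_mem i), by rw [← List.prod_ofFn, List.ofFn_get]⟩

theorem length_mem_lengthSet_prod {l : List H} (hl : ∀ x ∈ l, Irreducible x) :
    l.length ∈ lengthSet H l.prod :=
  mem_lengthSet_iff_s19.2 ⟨l, hl, rfl, Associated.refl _⟩

theorem pos_of_mem_lengthSet {a : H} (ha : ¬IsUnit a) {k : ℕ} (hk : k ∈ lengthSet H a) :
    0 < k := by
  obtain ⟨l, hl, rfl, hla⟩ := mem_lengthSet_iff_s19.1 hk
  refine List.length_pos_iff.2 fun hnil => ha (hla.isUnit ?_)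
  simp [hnil]

theorem add_mem_lengthSet_mul {x y : H} {k l : ℕ} (hk : k ∈ lengthSet H x)
    (hl : l ∈ lengthSet H y) : k + l ∈ lengthSet H (x * y) := by
  obtain ⟨lx, hlx, rfl, hx⟩ := mem_lengthSet_iff_s19.1 hk
  obtain ⟨ly, hly, rfl, hy⟩ := mem_lengthSet_iff_s19.1 hl
  refine mem_lengthSet_iff_s19.2 ⟨lx ++ ly, ?_, List.length_append, ?_⟩
  · simpa [or_imp, forall_and] using ⟨hlx, hly⟩
  · simpa only [List.prod_append] using hx.mul_mul hy

theorem mul_mem_lengthSet_pow {b : H} {k : ℕ} (hk : k ∈ lengthSet H b) (t : ℕ) :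
    t * k ∈ lengthSet H (b ^ t) := by
  induction t with
  | zero => simp [lengthSet_of_isUnit isUnit_one]
  | succ t ih => simpa [pow_succ, add_mul] using add_mem_lengthSet_mul ih hk

theorem exists_mul_eq_of_add_mem_lengthSet {c : H} {k₁ k₂ : ℕ}
    (h : k₁ + k₂ ∈ lengthSet H c) :
    ∃ c₁ c₂, c = c₁ * c₂ ∧ k₁ ∈ lengthSet H c₁ ∧ k₂ ∈ lengthSet H c₂ := by
  obtain ⟨l, hl, hlen, u, rfl⟩ := mem_lengthSet_iff_s19.1 h
  refine ⟨(l.take k₁).prod, (l.drop k₁).prod * u, ?_, ?_, ?_⟩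
  · rw [← mul_assoc, List.prod_take_mul_prod_drop]
  · refine mem_lengthSet_iff_s19.2 ⟨l.take k₁, fun x hx => hl x (List.mem_of_mem_take hx), ?_,
      Associated.refl _⟩
    simp [hlen]
  · refine mem_lengthSet_iff_s19.2 ⟨l.drop k₁, fun x hx => hl x (List.mem_of_mem_drop hx), ?_,
      ⟨u, rfl⟩⟩
    simp [hlen]

theorem exists_list_irreducible_prod_eq_of_length_le {a : H} (ha : ¬IsUnit a) {N : ℕ}
    (hN : ∀ l : List H, (∀ x ∈ l, ¬IsUnit x) → l.prod = a → l.length ≤ N) :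
    ∃ l : List H, (∀ x ∈ l, Irreducible x) ∧ l.prod = a := by
  induction N generalizing a with
  | zero => simpa using hN [a] (by simpa using ha) (by simp)
  | succ N ih =>
    by_cases hirr : Irreducible a
    · exact ⟨[a], by simpa using hirr, by simp⟩
    obtain ⟨y, z, rfl, hy, hz⟩ : ∃ y z, a = y * z ∧ ¬IsUnit y ∧ ¬IsUnit z := by
      simpa [irreducible_iff, ha, not_or] using hirr
    obtain ⟨ly, hly, rfl⟩ := ih hy fun l hl hprod => by
      simpa using hN (l ++ [z]) (by simpa [or_imp, forall_and] using ⟨hl, hz⟩) (by simp [hprod])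
    obtain ⟨lz, hlz, rfl⟩ := ih hz fun l hl hprod => by
      simpa [add_comm] using hN (ly.prod :: l) (by simpa using ⟨hy, hl⟩) (by simp [hprod])
    exact ⟨ly ++ lz, by simpa [or_imp, forall_and] using ⟨hly, hlz⟩, List.prod_append⟩

end Lengths

section BFMonoid

variable {H : Type*} [CommMonoid H]

theorem IsBFMonoid.lengthSet_nonempty (hbf : IsBFMonoid H) (a : H) :
    (lengthSet H a).Nonempty := by
  by_cases ha : IsUnit a
  · simp [lengthSet_of_isUnit ha]
  · exact hbf.1 a ha

theorem IsBFMonoid.sSup_mem (hbf : IsBFMonoid H) (a : H) : sSup (lengthSet H a) ∈ lengthSet H a :=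
  Nat.sSup_mem (hbf.lengthSet_nonempty a) (hbf.2 a).bddAbove

theorem IsBFMonoid.sInf_mem (hbf : IsBFMonoid H) (a : H) : sInf (lengthSet H a) ∈ lengthSet H a :=
  Nat.sInf_mem (hbf.lengthSet_nonempty a)

theorem IsBFMonoid.le_sSup (hbf : IsBFMonoid H) {a : H} {k : ℕ} (hk : k ∈ lengthSet H a) :
    k ≤ sSup (lengthSet H a) :=
  le_csSup (hbf.2 a).bddAbove hk

theorem IsBFMonoid.one_le_elasticity (hbf : IsBFMonoid H) (a : H) : 1 ≤ elasticity H a := by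
  by_cases ha : IsUnit a
  · simp [elasticity, ha]
  have hmin := pos_of_mem_lengthSet ha (hbf.sInf_mem a)
  rw [elasticity, if_neg ha, one_le_div (by exact_mod_cast hmin)]
  exact_mod_cast hbf.le_sSup (hbf.sInf_mem a)

theorem IsBFMonoid.mul_sSup_le_of_pow_dvd (hbf : IsBFMonoid H) {b c : H} {t : ℕ}
    (h : b ^ t ∣ c) : t * sSup (lengthSet H b) ≤ sSup (lengthSet H c) := by
  obtain ⟨d, rfl⟩ := h
  exact (Nat.le_add_right _ _).trans <| hbf.le_sSup <| add_mem_lengthSet_mul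
    (mul_mem_lengthSet_pow (hbf.sSup_mem b) t) (hbf.sSup_mem d)

theorem IsBFMonoid.finiteMultiplicity (hbf : IsBFMonoid H) {b : H} (hb : ¬IsUnit b) (c : H) :
    FiniteMultiplicity b c := by
  refine ⟨sSup (lengthSet H c), fun h => ?_⟩
  have hM := pos_of_mem_lengthSet hb (hbf.sSup_mem b)
  have := hbf.mul_sSup_le_of_pow_dvd h
  nlinarith

end BFMonoid

namespace StronglyPrimary

variable {H : Type*} [CancelCommMonoid H]

theorem exists_dvd_list_prod (hsp : StronglyPrimary H) {a : H} (ha : ¬IsUnit a) :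
    ∃ n, 0 < n ∧
      ∀ l : List H, (∀ x ∈ l, ¬IsUnit x) → n ≤ l.length → a ∣ l.prod := by
  obtain ⟨n, hn, hdvd⟩ := hsp.2 a ha
  refine ⟨n, hn, fun l hl hlen => ?_⟩
  have htake : (l.take n).length = n := by simp [hlen]
  rw [← htake] at hdvd
  have := hdvd (l.take n).get fun i => hl _ (List.mem_of_mem_take (List.get_mem _ i))
  rw [← List.prod_ofFn, List.ofFn_get] at this
  exact this.trans ⟨_, (List.prod_take_mul_prod_drop l n).symm⟩

theorem exists_length_le_of_list_prod_eq (hsp : StronglyPrimary H) {a : H} (ha : ¬IsUnit a) :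
    ∃ N, ∀ l : List H, (∀ x ∈ l, ¬IsUnit x) → l.prod = a → l.length ≤ N := by
  obtain ⟨n, -, hdvd⟩ := hsp.exists_dvd_list_prod ha
  refine ⟨n, fun l hl hla => ?_⟩
  by_contra! hlen
  obtain ⟨d, hd⟩ :=
    hdvd (l.take n) (fun x hx => hl x (List.mem_of_mem_take hx)) (by simp [hlen.le])
  -- `a` divides the product of the first `n` factors, so the remaining factors multiply to a unit
  have hunit : IsUnit (l.drop n).prod := by
    refine IsUnit.of_mul_eq_one_right d (mul_eq_left (a := a).1 ?_)
    conv_rhs => rw [← hla, ← List.prod_take_mul_prod_drop l n, hd]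
    rw [mul_assoc]
  obtain ⟨x, hx⟩ := List.exists_mem_of_ne_nil (l.drop n) (by simpa using hlen)
  exact hl x (List.mem_of_mem_drop hx) (List.prod_isUnit_iff.1 hunit x hx)

theorem isBFMonoid (hsp : StronglyPrimary H) : IsBFMonoid H := by
  refine ⟨fun a ha => ?_, fun a => ?_⟩
  · obtain ⟨N, hN⟩ := hsp.exists_length_le_of_list_prod_eq ha
    obtain ⟨l, hl, rfl⟩ := exists_list_irreducible_prod_eq_of_length_le ha hN
    exact ⟨_, length_mem_lengthSet_prod hl⟩
  by_cases ha : IsUnit a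
  · simp [lengthSet_of_isUnit ha]
  obtain ⟨N, hN⟩ := hsp.exists_length_le_of_list_prod_eq ha
  refine (Set.finite_Iic N).subset fun k hk => ?_
  obtain ⟨l, hl, rfl, hla⟩ := mem_lengthSet_iff_s19.1 hk
  obtain ⟨l', hl', hlen, rfl⟩ := exists_list_prod_eq_of_associated hl ha hla
  exact hlen ▸ hN l' (fun x hx => (hl' x hx).not_isUnit) rfl

theorem exists_dvd_of_le_mem_lengthSet (hsp : StronglyPrimary H) {b : H} (hb : ¬IsUnit b) :
    ∃ n, 0 < n ∧ ∀ c k, k ∈ lengthSet H c → n ≤ k → b ∣ c := by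
  obtain ⟨n, hn, hdvd⟩ := hsp.exists_dvd_list_prod hb
  refine ⟨n, hn, fun c k hk hnk => ?_⟩
  obtain ⟨l, hl, rfl, hlc⟩ := mem_lengthSet_iff_s19.1 hk
  exact (hdvd l (fun x hx => (hl x hx).not_isUnit) hnk).trans hlc.dvd

end StronglyPrimary

theorem tendsto_mul_div_mul_add_atTop {M m : ℝ} (hm : m ≠ 0) (c : ℝ) :
    Tendsto (fun t : ℝ => t * M / (t * m + c)) atTop (𝓝 (M / m)) := by
  have h : Tendsto (fun t : ℝ => M / (m + c / t)) atTop (𝓝 (M / (m + 0))) :=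
    tendsto_const_nhds.div
      (tendsto_const_nhds.add (tendsto_const_nhds.div_atTop tendsto_id)) (by rwa [add_zero])
  rw [add_zero] at h
  refine h.congr' ((eventually_gt_atTop 0).mono fun t ht => ?_)
  have : m + c / t = (t * m + c) / t := by field_simp
  rw [this, div_div_eq_mul_div, mul_comm]

section LongFactorizations

variable {H : Type*} [CommMonoid H] {b : H} {n : ℕ}

theorem pow_div_dvd_of_mem_lengthSet (hdvd : ∀ c k, k ∈ lengthSet H c → n ≤ k → b ∣ c)
    {c : H} {k : ℕ} (hk : k ∈ lengthSet H c) : b ^ (k / n) ∣ c := by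
  suffices ∀ s c k, k ∈ lengthSet H c → s * n ≤ k → b ^ s ∣ c from
    this _ c k hk (Nat.div_mul_le_self k n)
  intro s
  induction s with
  | zero => exact fun c _ _ _ => (pow_zero b).symm ▸ one_dvd c
  | succ s ih =>
    intro c k hk hsk
    rw [Nat.succ_mul] at hsk
    obtain ⟨c₁, c₂, rfl, h₁, h₂⟩ :=
      exists_mul_eq_of_add_mem_lengthSet (k₁ := n) (k₂ := k - n)
        (by rwa [Nat.add_sub_cancel' (by omega)])
    rw [pow_succ']
    exact mul_dvd_mul (hdvd c₁ n h₁ le_rfl) (ih c₂ (k - n) h₂ (by omega))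

theorem IsBFMonoid.sSup_div_le_multiplicity (hbf : IsBFMonoid H) (hb : ¬IsUnit b)
    (hdvd : ∀ c k, k ∈ lengthSet H c → n ≤ k → b ∣ c) (c : H) :
    sSup (lengthSet H c) / n ≤ multiplicity b c :=
  (hbf.finiteMultiplicity hb c).le_multiplicity_of_pow_dvd
    (pow_div_dvd_of_mem_lengthSet hdvd (hbf.sSup_mem c))

theorem IsBFMonoid.mul_div_le_elasticity (hbf : IsBFMonoid H) (hb : ¬IsUnit b)
    (hdvd : ∀ c k, k ∈ lengthSet H c → n ≤ k → b ∣ c) {c : H} (hc : ¬IsUnit c) :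
    (multiplicity b c * sSup (lengthSet H b) : ℝ) /
      (multiplicity b c * sInf (lengthSet H b) + (n - 1 : ℕ)) ≤ elasticity H c := by
  obtain ⟨d, hcd, hbd⟩ := (hbf.finiteMultiplicity hb c).exists_eq_pow_mul_and_not_dvd
  set t := multiplicity b c
  have hmax : t * sSup (lengthSet H b) ≤ sSup (lengthSet H c) :=
    hbf.mul_sSup_le_of_pow_dvd ⟨d, hcd⟩
  have hd : sInf (lengthSet H d) < n := not_le.1 fun h => hbd (hdvd d _ (hbf.sInf_mem d) h)
  have hmin : sInf (lengthSet H c) ≤ t * sInf (lengthSet H b) + (n - 1) := by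
    have := Nat.sInf_le <| hcd ▸ add_mem_lengthSet_mul
      (mul_mem_lengthSet_pow (hbf.sInf_mem b) t) (hbf.sInf_mem d)
    omega
  have hpos := pos_of_mem_lengthSet hc (hbf.sInf_mem c)
  rw [elasticity, if_neg hc]
  exact div_le_div₀ (by positivity) (by exact_mod_cast hmax) (by exact_mod_cast hpos)
    (by exact_mod_cast hmin)

end LongFactorizations

/-- If `H` is strongly primary and `(a_k)` is a sequence in `H` with
`max L(a_k) → ∞`, then `liminf_k ρ(a_k) ≥ ρ(H)`. -/
theorem statement19 (H : Type*) [CancelCommMonoid H] (hsp : StronglyPrimary H)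
    (a : ℕ → H) (hmax : Tendsto (fun k : ℕ => sSup (lengthSet H (a k))) atTop atTop) :
    monoidElasticity H ≤ Filter.liminf (fun k : ℕ => ((elasticity H (a k) : ℝ) : EReal)) atTop := by
  have hbf := hsp.isBFMonoid
  refine iSup_le fun b => ?_
  by_cases hb : IsUnit b
  · rw [elasticity, if_pos hb]
    exact le_liminf_of_le (by isBoundedDefault) (Eventually.of_forall fun k =>
      EReal.coe_le_coe_iff.2 (hbf.one_le_elasticity (a k)))
  obtain ⟨n, hn, hdvd⟩ := hsp.exists_dvd_of_le_mem_lengthSet hb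
  set M := sSup (lengthSet H b)
  set m := sInf (lengthSet H b)
  set t : ℕ → ℕ := fun k => multiplicity b (a k)
  have ht : Tendsto t atTop atTop :=
    tendsto_atTop_mono (fun k => hbf.sSup_div_le_multiplicity hb hdvd (a k))
      ((Nat.tendsto_div_const_atTop hn.ne').comp hmax)
  have hm : (m : ℝ) ≠ 0 := by exact_mod_cast (pos_of_mem_lengthSet hb (hbf.sInf_mem b)).ne'
  have hlim : Tendsto (fun k => (t k * M : ℝ) / (t k * m + (n - 1 : ℕ))) atTop
      (𝓝 (elasticity H b)) := by
    rw [elasticity, if_neg hb]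
    exact (tendsto_mul_div_mul_add_atTop hm _).comp (tendsto_natCast_atTop_atTop.comp ht)
  have hunit : ∀ᶠ k in atTop, ¬IsUnit (a k) := (hmax.eventually_ge_atTop 1).mono fun k hk hu => by
    simp [lengthSet_of_isUnit hu] at hk
  calc ((elasticity H b : ℝ) : EReal)
      = liminf (fun k => (((t k * M : ℝ) / (t k * m + (n - 1 : ℕ)) : ℝ) : EReal)) atTop :=
        (EReal.tendsto_coe.2 hlim).liminf_eq.symm
    _ ≤ _ := liminf_le_liminf (hunit.mono fun k hk =>
        EReal.coe_le_coe_iff.2 (hbf.mul_div_le_elasticity hb hdvd hk))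
end
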